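/- Proposition (action predictability yields a valid SSP): in the undiscounted pOAMDP with reward R(s,a,s') = pred(a|s) − 1, where pred is induced by the set of optimal actions of an observer SSP satisfying assumptions (A1) and (A2), any stationary policy π that fails to reach the terminal set with probability 1 from some state has value −∞ from that state; consequently assumption (A1) holds for the induced SSP. -/

import Mathlib

open Finset Filter

/-- The Markov chain induced by a stationary deterministic policy. -/
noncomputable def chainOf {S A : Type*} [Fintype S]
    (T : S → A → S → ℝ) (π : S → A) : Matrix S S ℝ :=
  Matrix.of fun s s' => T s (π s) s'

lemma chainOf_apply {S A : Type*} [Fintype S] (T : S → A → S → ℝ) (π : S → A) (s s' : S) :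
    chainOf T π s s' = T s (π s) s' := rfl

section AuxChain
variable {S : Type*} [Fintype S] [DecidableEq S]

/-- Probability mass outside the terminal set after `n` steps. -/
noncomputable def qmass (P : Matrix S S ℝ) (ST : Finset S) (n : ℕ) (s : S) : ℝ :=
  ∑ u ∈ STᶜ, (P ^ n) s u

variable {P : Matrix S S ℝ} {ST : Finset S}

lemma pow_entry_nonneg (hP0 : ∀ i j, 0 ≤ P i j) : ∀ n, ∀ i j, 0 ≤ (P ^ n) i j := by
  intro n
  induction n with
  | zero => intro i j; rw [pow_zero, Matrix.one_apply]; split <;> norm_num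
  | succ n ih =>
    intro i j
    rw [pow_succ, Matrix.mul_apply]
    exact Finset.sum_nonneg fun k _ => mul_nonneg (ih i k) (hP0 k j)

lemma pow_rowsum (hP1 : ∀ i, ∑ j, P i j = 1) : ∀ n, ∀ i, ∑ j, (P ^ n) i j = 1 := by
  intro n
  induction n with
  | zero => intro i; simp [Matrix.one_apply]
  | succ n ih =>
    intro i
    simp only [pow_succ, Matrix.mul_apply]
    rw [Finset.sum_comm]
    simp_rw [← Finset.mul_sum, hP1]
    simpa using ih i

lemma row_delta (hP0 : ∀ i j, 0 ≤ P i j) (hP1 : ∀ i, ∑ j, P i j = 1) {v : S}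
    (hv : P v v = 1) (u : S) : P v u = if u = v then 1 else 0 := by
  rcases eq_or_ne u v with rfl | h
  · simp [hv]
  · rw [if_neg h]
    have hpair : P v u + P v v = ∑ j ∈ ({u, v} : Finset S), P v j :=
      (Finset.sum_pair h).symm
    have hle : ∑ j ∈ ({u, v} : Finset S), P v j ≤ ∑ j, P v j :=
      Finset.sum_le_sum_of_subset_of_nonneg (Finset.subset_univ _) fun j _ _ => hP0 v j
    have h2 : P v u + P v v ≤ 1 := by rw [hpair, ← hP1 v]; exact hle
    have h0 := hP0 v u
    linarith

lemma pow_absorbing (hP0 : ∀ i j, 0 ≤ P i j) (hP1 : ∀ i, ∑ j, P i j = 1)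
    (hAbs : ∀ v ∈ ST, P v v = 1) :
    ∀ n, ∀ v ∈ ST, ∀ u, (P ^ n) v u = if u = v then 1 else 0 := by
  intro n
  induction n with
  | zero =>
    intro v _ u
    rw [pow_zero, Matrix.one_apply]
    rcases eq_or_ne u v with rfl | h
    · simp
    · simp [h, Ne.symm h]
  | succ n ih =>
    intro v hv u
    rw [pow_succ, Matrix.mul_apply]
    have : ∀ k, (P ^ n) v k * P k u = (if k = v then 1 else 0) * P k u := by
      intro k; rw [ih v hv k]
    simp only [this, ite_mul, one_mul, zero_mul, Finset.sum_ite_eq', Finset.mem_univ, if_true]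
    exact row_delta hP0 hP1 (hAbs v hv) u

lemma qmass_nonneg (hP0 : ∀ i j, 0 ≤ P i j) (n : ℕ) (s : S) : 0 ≤ qmass P ST n s :=
  Finset.sum_nonneg fun u _ => pow_entry_nonneg hP0 n s u

lemma qmass_le_one (hP0 : ∀ i j, 0 ≤ P i j) (hP1 : ∀ i, ∑ j, P i j = 1) (n : ℕ) (s : S) :
    qmass P ST n s ≤ 1 := by
  calc qmass P ST n s ≤ ∑ u, (P ^ n) s u :=
        Finset.sum_le_sum_of_subset_of_nonneg (Finset.subset_univ _)
          (fun j _ _ => pow_entry_nonneg hP0 n s j)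
    _ = 1 := pow_rowsum hP1 n s

lemma qmass_terminal (hP0 : ∀ i j, 0 ≤ P i j) (hP1 : ∀ i, ∑ j, P i j = 1)
    (hAbs : ∀ v ∈ ST, P v v = 1) {v : S} (hv : v ∈ ST) (n : ℕ) : qmass P ST n v = 0 := by
  apply Finset.sum_eq_zero
  intro u hu
  rw [pow_absorbing hP0 hP1 hAbs n v hv u, if_neg]
  intro h
  exact (Finset.mem_compl.mp hu) (h ▸ hv)

lemma qmass_add (hP0 : ∀ i j, 0 ≤ P i j) (hP1 : ∀ i, ∑ j, P i j = 1)
    (hAbs : ∀ v ∈ ST, P v v = 1) (n m : ℕ) (s : S) :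
    qmass P ST (n + m) s = ∑ v ∈ STᶜ, (P ^ n) s v * qmass P ST m v := by
  have h1 : qmass P ST (n + m) s = ∑ v, (P ^ n) s v * qmass P ST m v := by
    unfold qmass
    rw [pow_add]
    simp only [Matrix.mul_apply]
    rw [Finset.sum_comm]
    simp [Finset.mul_sum]
  rw [h1, ← Finset.sum_add_sum_compl ST (fun v => (P ^ n) s v * qmass P ST m v)]
  have hz : ∑ v ∈ ST, (P ^ n) s v * qmass P ST m v = 0 :=
    Finset.sum_eq_zero fun v hv => by rw [qmass_terminal hP0 hP1 hAbs hv, mul_zero]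
  rw [hz, zero_add]

lemma qmass_anti (hP0 : ∀ i j, 0 ≤ P i j) (hP1 : ∀ i, ∑ j, P i j = 1)
    (hAbs : ∀ v ∈ ST, P v v = 1) {m n : ℕ} (hmn : m ≤ n) (s : S) :
    qmass P ST n s ≤ qmass P ST m s := by
  obtain ⟨d, rfl⟩ := Nat.exists_eq_add_of_le hmn
  rw [qmass_add hP0 hP1 hAbs m d s]
  calc ∑ v ∈ STᶜ, (P ^ m) s v * qmass P ST d v ≤ ∑ v ∈ STᶜ, (P ^ m) s v * 1 :=
        Finset.sum_le_sum fun v _ =>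
          mul_le_mul_of_nonneg_left (qmass_le_one hP0 hP1 d v) (pow_entry_nonneg hP0 m s v)
    _ = qmass P ST m s := by simp [qmass]

lemma qmass_geom (hP0 : ∀ i j, 0 ≤ P i j) (hP1 : ∀ i, ∑ j, P i j = 1)
    (hAbs : ∀ v ∈ ST, P v v = 1) {s : S} {N : ℕ}
    (hN : ∀ v, (∃ n, 0 < (P ^ n) s v) → qmass P ST N v ≤ 1 / 2) :
    ∀ k, qmass P ST (N * k) s ≤ (1 / 2) ^ k := by
  intro k
  induction k with
  | zero => simpa using qmass_le_one hP0 hP1 0 s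
  | succ k ih =>
    have h1 : qmass P ST (N * (k + 1)) s = ∑ v ∈ STᶜ, (P ^ (N * k)) s v * qmass P ST N v := by
      rw [Nat.mul_succ]; exact qmass_add hP0 hP1 hAbs _ _ s
    have h2 : ∑ v ∈ STᶜ, (P ^ (N * k)) s v * qmass P ST N v
        ≤ ∑ v ∈ STᶜ, (P ^ (N * k)) s v * (1 / 2) := by
      apply Finset.sum_le_sum
      intro v _
      rcases (pow_entry_nonneg hP0 (N * k) s v).eq_or_lt with h | h
      · rw [← h]; simp
      · exact mul_le_mul_of_nonneg_left (hN v ⟨N * k, h⟩) h.le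
    have h3 : ∑ v ∈ STᶜ, (P ^ (N * k)) s v * (1 / 2) = qmass P ST (N * k) s * (1 / 2) := by
      rw [← Finset.sum_mul]; rfl
    calc qmass P ST (N * (k + 1)) s ≤ qmass P ST (N * k) s * (1 / 2) := by
          rw [h1]; exact h2.trans h3.le
      _ ≤ (1 / 2) ^ k * (1 / 2) := mul_le_mul_of_nonneg_right ih (by norm_num)
      _ = (1 / 2) ^ (k + 1) := (pow_succ _ _).symm

lemma qmass_sum_le (hP0 : ∀ i j, 0 ≤ P i j) (hP1 : ∀ i, ∑ j, P i j = 1)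
    (hAbs : ∀ v ∈ ST, P v v = 1) {s : S} {N : ℕ} (hN1 : 1 ≤ N)
    (hgeom : ∀ k, qmass P ST (N * k) s ≤ (1 / 2) ^ k) :
    ∀ n, ∑ t ∈ Finset.range n, qmass P ST t s ≤ 2 * N := by
  have hblock : ∀ k, ∑ t ∈ Finset.range (N * k), qmass P ST t s
      ≤ (∑ j ∈ Finset.range k, (1 / 2 : ℝ) ^ j) * N := by
    intro k
    induction k with
    | zero => simp
    | succ k ih =>
      rw [Nat.mul_succ, ← Finset.sum_range_add_sum_Ico _ (Nat.le_add_right (N * k) N)]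
      have hb : ∑ t ∈ Finset.Ico (N * k) (N * k + N), qmass P ST t s ≤ (1 / 2 : ℝ) ^ k * N := by
        calc ∑ t ∈ Finset.Ico (N * k) (N * k + N), qmass P ST t s
            ≤ ∑ _t ∈ Finset.Ico (N * k) (N * k + N), (1 / 2 : ℝ) ^ k := by
              apply Finset.sum_le_sum
              intro t ht
              exact (qmass_anti hP0 hP1 hAbs (Finset.mem_Ico.mp ht).1 s).trans (hgeom k)
          _ = (1 / 2 : ℝ) ^ k * N := by
              rw [Finset.sum_const, Nat.card_Ico, Nat.add_sub_cancel_left, nsmul_eq_mul, mul_comm]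
      rw [Finset.sum_range_succ, add_mul]
      linarith
  intro n
  have h1 : ∑ t ∈ Finset.range n, qmass P ST t s ≤ ∑ t ∈ Finset.range (N * n), qmass P ST t s := by
    apply Finset.sum_le_sum_of_subset_of_nonneg
    · exact Finset.range_subset_range.mpr (Nat.le_mul_of_pos_left n hN1)
    · intro t _ _; exact qmass_nonneg hP0 t s
  have h2 : (∑ j ∈ Finset.range n, (1 / 2 : ℝ) ^ j) ≤ 2 := by
    rw [geom_sum_eq (by norm_num : (1 / 2 : ℝ) ≠ 1)]
    have he : ((1 / 2 : ℝ) ^ n - 1) / ((1 / 2 : ℝ) - 1) = 2 - 2 * (1 / 2) ^ n := by ring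
    rw [he]
    have : (0 : ℝ) ≤ (1 / 2 : ℝ) ^ n := by positivity
    linarith
  have hN0 : (0 : ℝ) ≤ (N : ℝ) := Nat.cast_nonneg N
  have hgs : (0:ℝ) ≤ ∑ j ∈ Finset.range n, (1 / 2 : ℝ) ^ j :=
    Finset.sum_nonneg fun j _ => by positivity
  calc ∑ t ∈ Finset.range n, qmass P ST t s ≤ (∑ j ∈ Finset.range n, (1 / 2 : ℝ) ^ j) * N :=
        h1.trans (hblock n)
    _ ≤ 2 * N := by nlinarith

lemma exists_good_N {s : S}
    (hreach : ∀ v : S, (∃ n, 0 < (P ^ n) s v) →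
      Tendsto (fun m => qmass P ST m v) atTop (nhds 0)) :
    ∃ N, 1 ≤ N ∧ ∀ v, (∃ n, 0 < (P ^ n) s v) → qmass P ST N v ≤ 1 / 2 := by
  have hev : ∀ v : S, ∀ᶠ N in atTop, ((∃ n, 0 < (P ^ n) s v) → qmass P ST N v ≤ 1 / 2) := by
    intro v
    by_cases h : ∃ n, 0 < (P ^ n) s v
    · exact ((hreach v h).eventually_lt_const (by norm_num : (0 : ℝ) < 1 / 2)).mono
        fun N hN _ => hN.le
    · exact Eventually.of_forall fun N h' => absurd h' h
  obtain ⟨N, hN1, hN⟩ := ((eventually_ge_atTop 1).and (eventually_all.2 hev)).exists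
  exact ⟨N, hN1, hN⟩

end AuxChain

/-- Reaching the terminal set `ST` with probability 1 from `s` under policy `π`. -/
def ReachesTerminal {S A : Type*} [Fintype S] [DecidableEq S]
    (T : S → A → S → ℝ) (ST : Finset S) (π : S → A) (s : S) : Prop :=
  Tendsto (fun n => ∑ u ∈ ST, ((chainOf T π) ^ n) s u) atTop (nhds 1)

lemma reaches_iff {S A : Type*} [Fintype S] [DecidableEq S]
    (T : S → A → S → ℝ) (π : S → A) (ST : Finset S)
    (hP1 : ∀ i, ∑ j, chainOf T π i j = 1) (s : S) :
    ReachesTerminal T ST π s ↔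
      Tendsto (fun n => qmass (chainOf T π) ST n s) atTop (nhds 0) := by
  have key : ∀ n, ∑ u ∈ ST, ((chainOf T π) ^ n) s u = 1 - qmass (chainOf T π) ST n s := by
    intro n
    have hsplit := Finset.sum_add_sum_compl ST (fun u => ((chainOf T π) ^ n) s u)
    have hrow : ∑ u, ((chainOf T π) ^ n) s u = 1 := pow_rowsum hP1 n s
    unfold qmass
    linarith
  unfold ReachesTerminal
  simp_rw [key]
  constructor
  · intro h
    have h2 := h.const_sub 1
    simpa using h2
  · intro h
    have h2 := h.const_sub 1
    simpa using h2

lemma exists_good_N_all {S : Type*} [Fintype S] [DecidableEq S]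
    {P : Matrix S S ℝ} {ST : Finset S}
    (htend : ∀ v : S, Tendsto (fun m => qmass P ST m v) atTop (nhds 0)) :
    ∃ N, 1 ≤ N ∧ ∀ v, qmass P ST N v ≤ 1 / 2 := by
  have hev : ∀ v : S, ∀ᶠ N in atTop, qmass P ST N v ≤ 1 / 2 := fun v =>
    ((htend v).eventually_lt_const (by norm_num : (0 : ℝ) < 1 / 2)).mono fun N hN => hN.le
  obtain ⟨N, hN1, hN⟩ := ((eventually_ge_atTop 1).and (eventually_all.2 hev)).exists
  exact ⟨N, hN1, hN⟩

/-- The pOAMDP reward collected at a nonterminal state. -/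
noncomputable def rhoF {S A : Type*} [DecidableEq A] (Opt : S → Finset A) (π : S → A)
    (u : S) : ℝ :=
  (if π u ∈ Opt u then 1 / ((Opt u).card : ℝ) else 0) - 1

lemma rhoF_ge {S A : Type*} [DecidableEq A] (Opt : S → Finset A) (π : S → A) (u : S) :
    (-1 : ℝ) ≤ rhoF Opt π u := by
  unfold rhoF
  split
  · have : (0 : ℝ) ≤ 1 / ((Opt u).card : ℝ) := by positivity
    linarith
  · norm_num

lemma rhoF_zero {S A : Type*} [DecidableEq A] (Opt : S → Finset A) (π : S → A) {u : S}
    (h1 : π u ∈ Opt u) (h2 : (Opt u).card = 1) : rhoF Opt π u = 0 := by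
  simp [rhoF, h1, h2]

lemma rhoF_le_neg_half {S A : Type*} [DecidableEq A] (Opt : S → Finset A) (π : S → A) {u : S}
    (hne : (Opt u).Nonempty) (h : ¬(π u ∈ Opt u ∧ (Opt u).card = 1)) :
    rhoF Opt π u ≤ -(1 / 2) := by
  by_cases hopt : π u ∈ Opt u
  · have hc : (Opt u).card ≠ 1 := fun hc => h ⟨hopt, hc⟩
    have h1 : 0 < (Opt u).card := hne.card_pos
    have h2 : 2 ≤ (Opt u).card := by omega
    have h2' : (2 : ℝ) ≤ ((Opt u).card : ℝ) := by exact_mod_cast h2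
    have hhalf : 1 / ((Opt u).card : ℝ) ≤ 1 / 2 :=
      one_div_le_one_div_of_le (by norm_num) h2'
    simp only [rhoF, if_pos hopt]
    linarith
  · simp only [rhoF, if_neg hopt]
    norm_num

lemma inner_eq {S A : Type*} [Fintype S] [DecidableEq S] [DecidableEq A]
    (P : Matrix S S ℝ) (ST : Finset S) (Opt : S → Finset A) (π : S → A) (t : ℕ) (s : S) :
    ∑ u, (P ^ t) s u *
        (if u ∈ ST then 0 else (if π u ∈ Opt u then 1 / ((Opt u).card : ℝ) else 0) - 1)
      = ∑ u ∈ STᶜ, (P ^ t) s u * rhoF Opt π u := by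
  rw [← Finset.sum_add_sum_compl ST]
  have h1 : ∑ u ∈ ST, (P ^ t) s u *
      (if u ∈ ST then 0 else (if π u ∈ Opt u then 1 / ((Opt u).card : ℝ) else 0) - 1) = 0 :=
    Finset.sum_eq_zero fun u hu => by rw [if_pos hu, mul_zero]
  have h2 : ∑ u ∈ STᶜ, (P ^ t) s u *
      (if u ∈ ST then 0 else (if π u ∈ Opt u then 1 / ((Opt u).card : ℝ) else 0) - 1)
      = ∑ u ∈ STᶜ, (P ^ t) s u * rhoF Opt π u :=
    Finset.sum_congr rfl fun u hu => by rw [if_neg (Finset.mem_compl.mp hu)]; rfl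
  rw [h1, h2, zero_add]

/-- Proposition (action predictability yields a valid SSP).
The undiscounted pOAMDP reward is `R(s,a,·) = pred(a|s) − 1`, where `pred(·|s)` is
uniform over the set `Opt s` of optimal actions of the observer's SSP; the hypothesis
`hObserver` expresses that the observer's problem is a valid SSP (every policy selecting
optimal observer actions is proper).  Then the induced SSP satisfies (A1): a stationary
policy reaches the terminal set with probability 1 from `s` iff its value at `s` is
finite (the antitone partial sums of expected rewards, with zero reward at terminal
states, are bounded below) — in particular any policy failing to reach the terminal set
with probability 1 from some state has value `−∞` there — and (A2): a proper policy
exists. -/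
theorem action_predictability_valid_SSP
    {S A : Type*} [Fintype S] [DecidableEq S] [Fintype A] [DecidableEq A] [Nonempty A]
    (T : S → A → S → ℝ) (hT0 : ∀ s a s', 0 ≤ T s a s') (hT1 : ∀ s a, ∑ s', T s a s' = 1)
    (ST : Finset S) (hSTne : ST.Nonempty) (habs : ∀ s ∈ ST, ∀ a, T s a s = 1)
    (Opt : S → Finset A) (hOptne : ∀ s, (Opt s).Nonempty)
    (hObserver : ∀ σ : S → A, (∀ s, σ s ∈ Opt s) → ∀ s, ReachesTerminal T ST σ s) :
    (∀ π : S → A, ∀ s : S,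
      ReachesTerminal T ST π s ↔
        BddBelow (Set.range (fun n : ℕ =>
          ∑ t ∈ Finset.range n, ∑ u, ((chainOf T π) ^ t) s u *
            (if u ∈ ST then 0
             else (if π u ∈ Opt u then 1 / ((Opt u).card : ℝ) else 0) - 1)))) ∧
    (∃ π : S → A, ∀ s, ReachesTerminal T ST π s) := by
  classical
  constructor
  · intro π s
    have hP0 : ∀ i j, 0 ≤ chainOf T π i j := fun i j => hT0 i (π i) j
    have hP1 : ∀ i, ∑ j, chainOf T π i j = 1 := fun i => hT1 i (π i)
    have hPdiag : ∀ v ∈ ST, chainOf T π v v = 1 := fun v hv => habs v hv (π v)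
    rw [reaches_iff T π ST hP1 s]
    simp only [inner_eq (chainOf T π) ST Opt π]
    set P : Matrix S S ℝ := chainOf T π with hPdef
    constructor
    · -- reaches ⇒ bounded below
      intro htend
      have hreach : ∀ v : S, (∃ n, 0 < (P ^ n) s v) →
          Tendsto (fun m => qmass P ST m v) atTop (nhds 0) := by
        intro v hv
        obtain ⟨n, hc⟩ := hv
        by_cases hvT : v ∈ ST
        · have hz : (fun m => qmass P ST m v) = fun _ => 0 :=
            funext fun m => qmass_terminal hP0 hP1 hPdiag hvT m
          rw [hz]; exact tendsto_const_nhds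
        · have hub : ∀ m, qmass P ST m v ≤ qmass P ST (m + n) s / (P ^ n) s v := by
            intro m
            rw [le_div_iff₀ hc]
            have hq : qmass P ST (m + n) s = qmass P ST (n + m) s := by rw [add_comm]
            rw [hq, qmass_add hP0 hP1 hPdiag n m s]
            have hvmem : v ∈ STᶜ := Finset.mem_compl.mpr hvT
            calc qmass P ST m v * (P ^ n) s v = (P ^ n) s v * qmass P ST m v := mul_comm _ _
              _ ≤ ∑ w ∈ STᶜ, (P ^ n) s w * qmass P ST m w :=
                Finset.single_le_sum (f := fun w => (P ^ n) s w * qmass P ST m w)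
                  (fun w _ => mul_nonneg (pow_entry_nonneg hP0 n s w)
                    (qmass_nonneg hP0 m w)) hvmem
          have hgt : Tendsto (fun m => qmass P ST (m + n) s / (P ^ n) s v) atTop (nhds 0) := by
            have h1 := (tendsto_add_atTop_iff_nat n).2 htend
            simpa using h1.div_const ((P ^ n) s v)
          exact squeeze_zero (fun m => qmass_nonneg hP0 m v) hub hgt
      obtain ⟨N, hN1, hN⟩ := exists_good_N hreach
      have hsum := qmass_sum_le hP0 hP1 hPdiag hN1 (qmass_geom hP0 hP1 hPdiag hN)
      refine ⟨-(2 * (N : ℝ)), ?_⟩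
      rintro x ⟨n, rfl⟩
      show -(2 * (N : ℝ)) ≤ ∑ t ∈ Finset.range n, ∑ u ∈ STᶜ, (P ^ t) s u * rhoF Opt π u
      have hterm : ∀ t, -(qmass P ST t s) ≤ ∑ u ∈ STᶜ, (P ^ t) s u * rhoF Opt π u := by
        intro t
        have h1 : ∀ u ∈ STᶜ, (P ^ t) s u * (-1) ≤ (P ^ t) s u * rhoF Opt π u := fun u _ =>
          mul_le_mul_of_nonneg_left (rhoF_ge Opt π u) (pow_entry_nonneg hP0 t s u)
        have h0 : ∑ u ∈ STᶜ, (P ^ t) s u * (-1) = -(qmass P ST t s) := by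
          simp only [mul_neg_one]
          exact Finset.sum_neg_distrib _
        rw [← h0]
        exact Finset.sum_le_sum h1
      calc -(2 * (N : ℝ)) ≤ -(∑ t ∈ Finset.range n, qmass P ST t s) := neg_le_neg (hsum n)
        _ = ∑ t ∈ Finset.range n, -(qmass P ST t s) := (Finset.sum_neg_distrib _).symm
        _ ≤ ∑ t ∈ Finset.range n, ∑ u ∈ STᶜ, (P ^ t) s u * rhoF Opt π u :=
            Finset.sum_le_sum fun t _ => hterm t
    · -- bounded below ⇒ reaches
      intro hB
      obtain ⟨b, hb⟩ := hB
      have hbV : ∀ n, b ≤ ∑ t ∈ Finset.range n, ∑ u ∈ STᶜ, (P ^ t) s u * rhoF Opt π u :=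
        fun n => hb ⟨n, rfl⟩
      have hWnonneg : ∀ t, (0:ℝ) ≤ ∑ u ∈ STᶜ.filter
          (fun u => ¬(π u ∈ Opt u ∧ (Opt u).card = 1)), (P ^ t) s u :=
        fun t => Finset.sum_nonneg fun u _ => pow_entry_nonneg hP0 t s u
      have hinner_le : ∀ t, ∑ u ∈ STᶜ, (P ^ t) s u * rhoF Opt π u
          ≤ -(1/2) * ∑ u ∈ STᶜ.filter (fun u => ¬(π u ∈ Opt u ∧ (Opt u).card = 1)),
              (P ^ t) s u := by
        intro t
        rw [← Finset.sum_filter_add_sum_filter_not STᶜ (fun u => π u ∈ Opt u ∧ (Opt u).card = 1)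
          (fun u => (P ^ t) s u * rhoF Opt π u)]
        have hz : ∑ u ∈ STᶜ.filter (fun u => π u ∈ Opt u ∧ (Opt u).card = 1),
            (P ^ t) s u * rhoF Opt π u = 0 :=
          Finset.sum_eq_zero fun u hu => by
            obtain ⟨-, h1, h2⟩ := Finset.mem_filter.mp hu
            rw [rhoF_zero Opt π h1 h2, mul_zero]
        have hw : ∑ u ∈ STᶜ.filter (fun u => ¬(π u ∈ Opt u ∧ (Opt u).card = 1)),
            (P ^ t) s u * rhoF Opt π u
            ≤ ∑ u ∈ STᶜ.filter (fun u => ¬(π u ∈ Opt u ∧ (Opt u).card = 1)),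
              (P ^ t) s u * (-(1/2)) :=
          Finset.sum_le_sum fun u hu =>
            mul_le_mul_of_nonneg_left
              (rhoF_le_neg_half Opt π (hOptne u) (Finset.mem_filter.mp hu).2)
              (pow_entry_nonneg hP0 t s u)
        have hw2 : ∑ u ∈ STᶜ.filter (fun u => ¬(π u ∈ Opt u ∧ (Opt u).card = 1)),
            (P ^ t) s u * (-(1/2))
            = -(1/2) * ∑ u ∈ STᶜ.filter (fun u => ¬(π u ∈ Opt u ∧ (Opt u).card = 1)),
                (P ^ t) s u := by
          rw [← Finset.sum_mul, mul_comm]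
        rw [hz, zero_add]
        exact hw.trans_eq hw2
      have hWbound : ∀ n, ∑ t ∈ Finset.range n,
          (∑ u ∈ STᶜ.filter (fun u => ¬(π u ∈ Opt u ∧ (Opt u).card = 1)), (P ^ t) s u)
          ≤ -(2*b) := by
        intro n
        have h1 : b ≤ -(1/2) * ∑ t ∈ Finset.range n,
            (∑ u ∈ STᶜ.filter (fun u => ¬(π u ∈ Opt u ∧ (Opt u).card = 1)), (P ^ t) s u) := by
          rw [Finset.mul_sum]
          exact (hbV n).trans (Finset.sum_le_sum fun t _ => hinner_le t)
        linarith
      have hWsummable : Summable (fun t =>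
          ∑ u ∈ STᶜ.filter (fun u => ¬(π u ∈ Opt u ∧ (Opt u).card = 1)), (P ^ t) s u) :=
        summable_of_sum_range_le hWnonneg hWbound
      have hWtend := hWsummable.tendsto_atTop_zero
      -- the observer-optimal extension σ of π on the zero-cost states
      set σ : S → A := fun u => if π u ∈ Opt u then π u else (hOptne u).choose with hσdef
      have hσOpt : ∀ u, σ u ∈ Opt u := by
        intro u
        simp only [hσdef]
        by_cases h : π u ∈ Opt u
        · rw [if_pos h]; exact h
        · rw [if_neg h]; exact (hOptne u).choose_spec
      have hQ0 : ∀ i j, 0 ≤ chainOf T σ i j := fun i j => hT0 i (σ i) j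
      have hQ1 : ∀ i, ∑ j, chainOf T σ i j = 1 := fun i => hT1 i (σ i)
      have hQdiag : ∀ v ∈ ST, chainOf T σ v v = 1 := fun v hv => habs v hv (σ v)
      have hQt : ∀ v, Tendsto (fun n => qmass (chainOf T σ) ST n v) atTop (nhds 0) :=
        fun v => (reaches_iff T σ ST hQ1 v).1 (hObserver σ hσOpt v)
      obtain ⟨M, hM1, hM⟩ := exists_good_N_all hQt
      have hMsum : ∀ v n, ∑ m ∈ Finset.range n, qmass (chainOf T σ) ST m v ≤ 2 * M :=
        fun v => qmass_sum_le hQ0 hQ1 hQdiag hM1 (qmass_geom hQ0 hQ1 hQdiag (fun w _ => hM w))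
      have hQsummable : ∀ v, Summable (fun m => qmass (chainOf T σ) ST m v) :=
        fun v => summable_of_sum_range_le (fun m => qmass_nonneg hQ0 m v) (hMsum v)
      set φ : S → ℝ := fun v => ∑' m, qmass (chainOf T σ) ST m v with hφdef
      have hφ0 : ∀ v, 0 ≤ φ v := fun v => tsum_nonneg fun m => qmass_nonneg hQ0 m v
      have hφle : ∀ v, φ v ≤ 2 * M := fun v =>
        Summable.tsum_le_of_sum_range_le (hQsummable v) (hMsum v)
      have hφT : ∀ v ∈ ST, φ v = 0 := by
        intro v hv
        have hz : (fun m => qmass (chainOf T σ) ST m v) = fun _ => (0:ℝ) :=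
          funext fun m => qmass_terminal hQ0 hQ1 hQdiag hv m
        calc φ v = ∑' m, qmass (chainOf T σ) ST m v := rfl
          _ = 0 := by rw [hz]; exact tsum_zero
      have hφrec : ∀ v, v ∉ ST → ∑ w, chainOf T σ v w * φ w = φ v - 1 := by
        intro v hv
        have h0 : qmass (chainOf T σ) ST 0 v = 1 := by
          unfold qmass
          rw [pow_zero]
          simp [Matrix.one_apply, Finset.sum_ite_eq, hv]
        have hsucc : ∀ m, qmass (chainOf T σ) ST (m + 1) v
            = ∑ w ∈ STᶜ, chainOf T σ v w * qmass (chainOf T σ) ST m w := by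
          intro m
          have h := qmass_add hQ0 hQ1 hQdiag 1 m v
          rw [pow_one] at h
          rw [Nat.add_comm m 1]
          exact h
        have hφv : φ v = 1 + ∑ w ∈ STᶜ, chainOf T σ v w * φ w := by
          calc φ v = qmass (chainOf T σ) ST 0 v
                + ∑' m, qmass (chainOf T σ) ST (m + 1) v := Summable.tsum_eq_zero_add (hQsummable v)
            _ = 1 + ∑' m, ∑ w ∈ STᶜ, chainOf T σ v w * qmass (chainOf T σ) ST m w := by
                rw [h0]
                congr 1
                exact tsum_congr hsucc
            _ = 1 + ∑ w ∈ STᶜ, chainOf T σ v w * φ w := by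
                congr 1
                rw [Summable.tsum_finsetSum (fun w _ => (hQsummable w).mul_left (chainOf T σ v w))]
                exact Finset.sum_congr rfl fun w _ => tsum_mul_left
        have hext : ∑ w, chainOf T σ v w * φ w = ∑ w ∈ STᶜ, chainOf T σ v w * φ w := by
          rw [← Finset.sum_add_sum_compl ST (fun w => chainOf T σ v w * φ w)]
          have hz2 : ∑ w ∈ ST, chainOf T σ v w * φ w = 0 :=
            Finset.sum_eq_zero fun w hw => by rw [hφT w hw, mul_zero]
          rw [hz2, zero_add]
        rw [hext]
        linarith [hφv]
      -- one-step Lyapunov inequality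
      have hstep : ∀ t : ℕ,
          (∑ u, (P ^ (t+1)) s u * φ u)
            + ∑ u ∈ STᶜ.filter (fun u => π u ∈ Opt u ∧ (Opt u).card = 1), (P ^ t) s u
          ≤ (∑ u, (P ^ t) s u * φ u)
            + 2 * M * ∑ u ∈ STᶜ.filter (fun u => ¬(π u ∈ Opt u ∧ (Opt u).card = 1)),
                (P ^ t) s u := by
        intro t
        have hexp : ∑ u, (P ^ (t+1)) s u * φ u
            = ∑ v, (P ^ t) s v * (∑ u, P v u * φ u) := by
          simp only [pow_succ, Matrix.mul_apply, Finset.sum_mul, Finset.mul_sum]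
          rw [Finset.sum_comm]
          exact Finset.sum_congr rfl fun v _ => Finset.sum_congr rfl fun u _ => by ring
        have hg_term : ∀ v ∈ ST, (∑ u, P v u * φ u) = 0 := by
          intro v hv
          have hrow : ∀ u, P v u = if u = v then 1 else 0 :=
            row_delta hP0 hP1 (hPdiag v hv)
          simp only [hrow, ite_mul, one_mul, zero_mul, Finset.sum_ite_eq', Finset.mem_univ,
            if_true]
          exact hφT v hv
        have hg_Z : ∀ v ∈ STᶜ.filter (fun u => π u ∈ Opt u ∧ (Opt u).card = 1),
            (∑ u, P v u * φ u) = φ v - 1 := by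
          intro v hv
          obtain ⟨hvc, hopt, -⟩ := Finset.mem_filter.mp hv
          have hσv : σ v = π v := by simp only [hσdef]; exact if_pos hopt
          have hPQ : ∀ u, P v u = chainOf T σ v u := by
            intro u
            rw [hPdef, chainOf_apply, chainOf_apply, hσv]
          simp only [hPQ]
          exact hφrec v (Finset.mem_compl.mp hvc)
        have hg_W : ∀ v, (∑ u, P v u * φ u) ≤ φ v + 2 * M := by
          intro v
          have h1 : ∑ u, P v u * φ u ≤ ∑ u, P v u * (2 * M) :=
            Finset.sum_le_sum fun u _ => mul_le_mul_of_nonneg_left (hφle u) (hP0 v u)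
          have h2 : ∑ u, P v u * (2 * (M:ℝ)) = 2 * M := by
            rw [← Finset.sum_mul, hP1 v, one_mul]
          have h3 := hφ0 v
          linarith
        have hsplit : ∑ v, (P ^ t) s v * (∑ u, P v u * φ u)
            = (∑ v ∈ ST, (P ^ t) s v * (∑ u, P v u * φ u))
              + ((∑ v ∈ STᶜ.filter (fun u => π u ∈ Opt u ∧ (Opt u).card = 1),
                    (P ^ t) s v * (∑ u, P v u * φ u))
                + ∑ v ∈ STᶜ.filter (fun u => ¬(π u ∈ Opt u ∧ (Opt u).card = 1)),
                    (P ^ t) s v * (∑ u, P v u * φ u)) := by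
          rw [Finset.sum_filter_add_sum_filter_not, Finset.sum_add_sum_compl]
        have e1 : ∑ v ∈ ST, (P ^ t) s v * (∑ u, P v u * φ u) = 0 :=
          Finset.sum_eq_zero fun v hv => by rw [hg_term v hv, mul_zero]
        have e2 : ∑ v ∈ STᶜ.filter (fun u => π u ∈ Opt u ∧ (Opt u).card = 1),
            (P ^ t) s v * (∑ u, P v u * φ u)
            = (∑ v ∈ STᶜ.filter (fun u => π u ∈ Opt u ∧ (Opt u).card = 1), (P ^ t) s v * φ v)
              - ∑ v ∈ STᶜ.filter (fun u => π u ∈ Opt u ∧ (Opt u).card = 1), (P ^ t) s v := by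
          rw [← Finset.sum_sub_distrib]
          exact Finset.sum_congr rfl fun v hv => by rw [hg_Z v hv]; ring
        have e3 : ∑ v ∈ STᶜ.filter (fun u => ¬(π u ∈ Opt u ∧ (Opt u).card = 1)),
            (P ^ t) s v * (∑ u, P v u * φ u)
            ≤ (∑ v ∈ STᶜ.filter (fun u => ¬(π u ∈ Opt u ∧ (Opt u).card = 1)),
                (P ^ t) s v * φ v)
              + 2 * M * ∑ v ∈ STᶜ.filter (fun u => ¬(π u ∈ Opt u ∧ (Opt u).card = 1)),
                  (P ^ t) s v := by
          have hb1 : ∀ v ∈ STᶜ.filter (fun u => ¬(π u ∈ Opt u ∧ (Opt u).card = 1)),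
              (P ^ t) s v * (∑ u, P v u * φ u)
                ≤ (P ^ t) s v * φ v + (P ^ t) s v * (2 * M) := by
            intro v _
            calc (P ^ t) s v * (∑ u, P v u * φ u) ≤ (P ^ t) s v * (φ v + 2 * M) :=
                  mul_le_mul_of_nonneg_left (hg_W v) (pow_entry_nonneg hP0 t s v)
              _ = (P ^ t) s v * φ v + (P ^ t) s v * (2 * M) := by ring
          calc ∑ v ∈ STᶜ.filter (fun u => ¬(π u ∈ Opt u ∧ (Opt u).card = 1)),
                (P ^ t) s v * (∑ u, P v u * φ u)
              ≤ ∑ v ∈ STᶜ.filter (fun u => ¬(π u ∈ Opt u ∧ (Opt u).card = 1)),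
                  ((P ^ t) s v * φ v + (P ^ t) s v * (2 * M)) := Finset.sum_le_sum hb1
            _ = _ := by
                rw [Finset.sum_add_distrib, ← Finset.sum_mul]
                ring
        have e4 : (∑ v ∈ STᶜ.filter (fun u => π u ∈ Opt u ∧ (Opt u).card = 1),
              (P ^ t) s v * φ v)
            + ∑ v ∈ STᶜ.filter (fun u => ¬(π u ∈ Opt u ∧ (Opt u).card = 1)), (P ^ t) s v * φ v
            ≤ ∑ u, (P ^ t) s u * φ u := by
          rw [Finset.sum_filter_add_sum_filter_not]
          exact Finset.sum_le_sum_of_subset_of_nonneg (Finset.subset_univ _)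
            fun v _ _ => mul_nonneg (pow_entry_nonneg hP0 t s v) (hφ0 v)
        rw [hexp, hsplit]
        linarith
      have htel : ∀ n : ℕ,
          (∑ t ∈ Finset.range n, ∑ u ∈ STᶜ.filter (fun u => π u ∈ Opt u ∧ (Opt u).card = 1),
              (P ^ t) s u)
            + ∑ u, (P ^ n) s u * φ u
          ≤ (∑ u, (P ^ 0) s u * φ u)
            + 2 * M * ∑ t ∈ Finset.range n,
                ∑ u ∈ STᶜ.filter (fun u => ¬(π u ∈ Opt u ∧ (Opt u).card = 1)), (P ^ t) s u := by
        intro n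
        induction n with
        | zero => simp
        | succ n ih =>
          have hs := hstep n
          rw [Finset.sum_range_succ, Finset.sum_range_succ]
          have hdistr := mul_add (2 * (M:ℝ))
            (∑ t ∈ Finset.range n,
              ∑ u ∈ STᶜ.filter (fun u => ¬(π u ∈ Opt u ∧ (Opt u).card = 1)), (P ^ t) s u)
            (∑ u ∈ STᶜ.filter (fun u => ¬(π u ∈ Opt u ∧ (Opt u).card = 1)), (P ^ n) s u)
          linarith
      have hZbound : ∀ n, ∑ t ∈ Finset.range n,
          (∑ u ∈ STᶜ.filter (fun u => π u ∈ Opt u ∧ (Opt u).card = 1), (P ^ t) s u)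
          ≤ (∑ u, (P ^ 0) s u * φ u) + 2 * M * (-(2*b)) := by
        intro n
        have h1 := htel n
        have h2 : 0 ≤ ∑ u, (P ^ n) s u * φ u :=
          Finset.sum_nonneg fun u _ => mul_nonneg (pow_entry_nonneg hP0 n s u) (hφ0 u)
        have hM0 : (0:ℝ) ≤ 2 * M := by positivity
        have h4 := mul_le_mul_of_nonneg_left (hWbound n) hM0
        linarith
      have hZsummable : Summable (fun t =>
          ∑ u ∈ STᶜ.filter (fun u => π u ∈ Opt u ∧ (Opt u).card = 1), (P ^ t) s u) :=
        summable_of_sum_range_le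
          (fun t => Finset.sum_nonneg fun u _ => pow_entry_nonneg hP0 t s u) hZbound
      have hZtend := hZsummable.tendsto_atTop_zero
      have hqdecomp : (fun n => qmass P ST n s)
          = fun t => (∑ u ∈ STᶜ.filter (fun u => π u ∈ Opt u ∧ (Opt u).card = 1), (P ^ t) s u)
            + ∑ u ∈ STᶜ.filter (fun u => ¬(π u ∈ Opt u ∧ (Opt u).card = 1)), (P ^ t) s u :=
        funext fun t => (Finset.sum_filter_add_sum_filter_not STᶜ _ _).symm
      have hfinal := hZtend.add hWtend
      rw [add_zero] at hfinal
      rw [hqdecomp]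
      exact hfinal
  · -- (A2): a proper policy exists
    refine ⟨fun u => (hOptne u).choose, hObserver _ fun u => (hOptne u).choose_spec⟩
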